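/- arXiv:2503.19166 — 3 statements merged into one kernel-verified Lean document; each statement's English description precedes it below -/
import Mathlib

section
/- For the bi-objective problem OMZR with f1 = OneMax and f2 = ZeroRoyalRoad on bit-strings of length n = b·ℓ (b > 1), the Pareto set equals exactly the set of bit-strings x in which every block is an all-ones block or an all-zeros block. -/
open Finset

/-- Number of one-bits of a bit-string. -/
def onesCount {n : ℕ} (x : Fin n → Bool) : ℕ :=
  (Finset.univ.filter fun i => x i = true).card

/-- Number of zero-bits of a bit-string. -/
def zerosCount {n : ℕ} (x : Fin n → Bool) : ℕ :=
  (Finset.univ.filter fun i => x i = false).card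

/-- Number of leading one-bits. -/
def leadingOnes {n : ℕ} (x : Fin n → Bool) : ℕ :=
  (Finset.univ.filter fun i : Fin n => ∀ j : Fin n, j ≤ i → x j = true).card

/-- Number of trailing zero-bits. -/
def trailingZeroes {n : ℕ} (x : Fin n → Bool) : ℕ :=
  (Finset.univ.filter fun i : Fin n => ∀ j : Fin n, i ≤ j → x j = false).card

/-- `y` dominates `x` for the bi-objective maximisation problem `(f1, f2)`. -/
def dominates {n : ℕ} (f1 f2 : (Fin n → Bool) → ℕ) (y x : Fin n → Bool) : Prop :=
  f1 x ≤ f1 y ∧ f2 x ≤ f2 y ∧ (f1 x < f1 y ∨ f2 x < f2 y)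

/-- `x` is Pareto optimal: no solution dominates it. -/
def paretoOptimal {n : ℕ} (f1 f2 : (Fin n → Bool) → ℕ) (x : Fin n → Bool) : Prop :=
  ∀ y, ¬ dominates f1 f2 y x

/-- `x` is a non-global Pareto local optimum: not Pareto optimal, and not dominated by
any bit-string at Hamming distance exactly 1. -/
def nonGlobalParetoLocalOpt {n : ℕ} (f1 f2 : (Fin n → Bool) → ℕ) (x : Fin n → Bool) : Prop :=
  ¬ paretoOptimal f1 f2 x ∧ ∀ y, hammingDist y x = 1 → ¬ dominates f1 f2 y x

/-- The ZeroJump function with jump parameter `k`. -/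
def zeroJump (n k : ℕ) (x : Fin n → Bool) : ℕ :=
  if zerosCount x ≤ n - k ∨ x = (fun _ => false) then k + zerosCount x else n - zerosCount x

/-- The OneJump function with jump parameter `k`. -/
def oneJump (n k : ℕ) (x : Fin n → Bool) : ℕ :=
  if onesCount x ≤ n - k ∨ x = (fun _ => true) then k + onesCount x else n - onesCount x

/-- Block `j` (0-indexed) of the bit-string `x` (with `b` blocks of length `ℓ`) is all-ones. -/
def blockAllOnes (b ℓ : ℕ) (x : Fin (b * ℓ) → Bool) (j : Fin b) : Prop :=
  ∀ i : Fin (b * ℓ), (i : ℕ) / ℓ = (j : ℕ) → x i = true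

/-- Block `j` (0-indexed) of the bit-string `x` is all-zeros. -/
def blockAllZeros (b ℓ : ℕ) (x : Fin (b * ℓ) → Bool) (j : Fin b) : Prop :=
  ∀ i : Fin (b * ℓ), (i : ℕ) / ℓ = (j : ℕ) → x i = false

instance (b ℓ : ℕ) (x : Fin (b * ℓ) → Bool) (j : Fin b) : Decidable (blockAllOnes b ℓ x j) := by
  unfold blockAllOnes; infer_instance

instance (b ℓ : ℕ) (x : Fin (b * ℓ) → Bool) (j : Fin b) : Decidable (blockAllZeros b ℓ x j) := by
  unfold blockAllZeros; infer_instance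

/-- OneRoyalRoad: `ℓ` times the number of all-ones blocks. -/
def oneRoyalRoad (b ℓ : ℕ) (x : Fin (b * ℓ) → Bool) : ℕ :=
  ℓ * (Finset.univ.filter fun j : Fin b => blockAllOnes b ℓ x j).card

/-- ZeroRoyalRoad: `ℓ` times the number of all-zeros blocks. -/
def zeroRoyalRoad (b ℓ : ℕ) (x : Fin (b * ℓ) → Bool) : ℕ :=
  ℓ * (Finset.univ.filter fun j : Fin b => blockAllZeros b ℓ x j).card

/-- Number of one-bits in block `j` of `x`. -/
def blockOnes (b ℓ : ℕ) (x : Fin (b * ℓ) → Bool) (j : Fin b) : ℕ :=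
  (Finset.univ.filter fun i : Fin (b * ℓ) => (i : ℕ) / ℓ = (j : ℕ) ∧ x i = true).card

/-- Number of zero-bits in block `j` of `x`. -/
def blockZeros (b ℓ : ℕ) (x : Fin (b * ℓ) → Bool) (j : Fin b) : ℕ :=
  (Finset.univ.filter fun i : Fin (b * ℓ) => (i : ℕ) / ℓ = (j : ℕ) ∧ x i = false).card


section Aux

variable {b ℓ : ℕ}

lemma ones_add_zeros {n : ℕ} (x : Fin n → Bool) : onesCount x + zerosCount x = n := by
  classical
  have h := Finset.card_filter_add_card_filter_not
    (s := (Finset.univ : Finset (Fin n))) (p := fun i => x i = true)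
  simpa [onesCount, zerosCount, Bool.not_eq_true] using h

lemma blockSet_card (hℓ : 0 < ℓ) (j : Fin b) :
    (Finset.univ.filter fun i : Fin (b * ℓ) => (i : ℕ) / ℓ = (j : ℕ)).card = ℓ := by
  classical
  have hlt : ∀ k : Fin ℓ, (j : ℕ) * ℓ + (k : ℕ) < b * ℓ := by
    intro k
    have hj : (j : ℕ) + 1 ≤ b := j.isLt
    calc (j : ℕ) * ℓ + (k : ℕ) < (j : ℕ) * ℓ + ℓ := by
          exact Nat.add_lt_add_left k.isLt _
      _ = ((j : ℕ) + 1) * ℓ := by ring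
      _ ≤ b * ℓ := Nat.mul_le_mul_right _ hj
  have hmap : (Finset.univ.filter fun i : Fin (b * ℓ) => (i : ℕ) / ℓ = (j : ℕ)) =
      (Finset.univ : Finset (Fin ℓ)).map
        ⟨fun k => ⟨(j : ℕ) * ℓ + (k : ℕ), hlt k⟩, by
          intro k1 k2 h
          have : (j : ℕ) * ℓ + (k1 : ℕ) = (j : ℕ) * ℓ + (k2 : ℕ) := congrArg Fin.val h
          exact Fin.ext (by omega)⟩ := by
    ext i
    simp only [Finset.mem_filter, Finset.mem_map, Finset.mem_univ, true_and,
      Function.Embedding.coeFn_mk]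
    constructor
    · intro h
      refine ⟨⟨(i : ℕ) % ℓ, Nat.mod_lt _ hℓ⟩, ?_⟩
      have hdm := Nat.div_add_mod (i : ℕ) ℓ
      rw [h] at hdm
      exact Fin.ext (by show (j : ℕ) * ℓ + (i : ℕ) % ℓ = (i : ℕ); rw [Nat.mul_comm]; exact hdm)
    · rintro ⟨k, rfl⟩
      show ((j : ℕ) * ℓ + (k : ℕ)) / ℓ = (j : ℕ)
      rw [Nat.mul_comm, Nat.mul_add_div hℓ, Nat.div_eq_of_lt k.isLt, Nat.add_zero]
  rw [hmap, Finset.card_map, Finset.card_univ, Fintype.card_fin]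

lemma blockOnes_add_blockZeros (hℓ : 0 < ℓ) (x : Fin (b * ℓ) → Bool) (j : Fin b) :
    blockOnes b ℓ x j + blockZeros b ℓ x j = ℓ := by
  classical
  have h := Finset.card_filter_add_card_filter_not
    (s := Finset.univ.filter fun i : Fin (b * ℓ) => (i : ℕ) / ℓ = (j : ℕ))
    (p := fun i => x i = true)
  rw [blockSet_card hℓ j] at h
  simpa [blockOnes, blockZeros, Finset.filter_filter, Bool.not_eq_true] using h

lemma zerosCount_eq_sum (hℓ : 0 < ℓ) (x : Fin (b * ℓ) → Bool) :
    zerosCount x = ∑ j : Fin b, blockZeros b ℓ x j := by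
  classical
  have hfib : ∀ i : Fin (b * ℓ), (i : ℕ) / ℓ < b := fun i =>
    Nat.div_lt_of_lt_mul (by rw [Nat.mul_comm ℓ b]; exact i.isLt)
  unfold zerosCount blockZeros
  rw [Finset.card_eq_sum_card_fiberwise
    (f := fun i : Fin (b * ℓ) => (⟨(i : ℕ) / ℓ, hfib i⟩ : Fin b))
    (t := Finset.univ) (fun _ _ => Finset.mem_univ _)]
  refine Finset.sum_congr rfl fun j _ => ?_
  rw [Finset.filter_filter]
  congr 1
  ext i
  simp [Fin.ext_iff, and_comm]

lemma onesCount_eq_sum (hℓ : 0 < ℓ) (x : Fin (b * ℓ) → Bool) :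
    onesCount x = ∑ j : Fin b, blockOnes b ℓ x j := by
  classical
  have hfib : ∀ i : Fin (b * ℓ), (i : ℕ) / ℓ < b := fun i =>
    Nat.div_lt_of_lt_mul (by rw [Nat.mul_comm ℓ b]; exact i.isLt)
  unfold onesCount blockOnes
  rw [Finset.card_eq_sum_card_fiberwise
    (f := fun i : Fin (b * ℓ) => (⟨(i : ℕ) / ℓ, hfib i⟩ : Fin b))
    (t := Finset.univ) (fun _ _ => Finset.mem_univ _)]
  refine Finset.sum_congr rfl fun j _ => ?_
  rw [Finset.filter_filter]
  congr 1
  ext i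
  simp [Fin.ext_iff, and_comm]

lemma blockAllZeros_iff_card (hℓ : 0 < ℓ) (x : Fin (b * ℓ) → Bool) (j : Fin b) :
    blockAllZeros b ℓ x j ↔ blockZeros b ℓ x j = ℓ := by
  classical
  constructor
  · intro h
    unfold blockZeros
    rw [Finset.filter_congr (q := fun i : Fin (b * ℓ) => (i : ℕ) / ℓ = (j : ℕ))
      (fun i _ => by simp only [and_iff_left_iff_imp]; exact fun hi => h i hi)]
    exact blockSet_card hℓ j
  · intro h i hi
    have hsub : (Finset.univ.filter fun i : Fin (b * ℓ) =>
        (i : ℕ) / ℓ = (j : ℕ) ∧ x i = false) ⊆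
        Finset.univ.filter fun i : Fin (b * ℓ) => (i : ℕ) / ℓ = (j : ℕ) := by
      intro a ha
      simp only [Finset.mem_filter] at ha ⊢
      exact ⟨ha.1, ha.2.1⟩
    have heq := Finset.eq_of_subset_of_card_le hsub
      (by rw [blockSet_card hℓ j]; exact le_of_eq h.symm)
    have : i ∈ Finset.univ.filter fun i : Fin (b * ℓ) =>
        (i : ℕ) / ℓ = (j : ℕ) ∧ x i = false := by
      rw [heq]; simp [hi]
    simp only [Finset.mem_filter] at this
    exact this.2.2

lemma blockAllOnes_zeros (x : Fin (b * ℓ) → Bool) (j : Fin b)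
    (h : blockAllOnes b ℓ x j) : blockZeros b ℓ x j = 0 := by
  classical
  unfold blockZeros
  rw [Finset.card_eq_zero, Finset.filter_eq_empty_iff]
  intro i _
  rintro ⟨hi, hfalse⟩
  rw [h i hi] at hfalse
  simp at hfalse

lemma zrr_le_zeros (hℓ : 0 < ℓ) (x : Fin (b * ℓ) → Bool) :
    zeroRoyalRoad b ℓ x ≤ zerosCount x := by
  classical
  rw [zerosCount_eq_sum hℓ x]
  unfold zeroRoyalRoad
  calc ℓ * (Finset.univ.filter fun j : Fin b => blockAllZeros b ℓ x j).card
      = ∑ _j ∈ Finset.univ.filter fun j : Fin b => blockAllZeros b ℓ x j, ℓ := by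
        rw [Finset.sum_const, smul_eq_mul, Nat.mul_comm]
    _ = ∑ j ∈ Finset.univ.filter fun j : Fin b => blockAllZeros b ℓ x j,
          blockZeros b ℓ x j := by
        refine Finset.sum_congr rfl fun j hj => ?_
        simp only [Finset.mem_filter] at hj
        exact ((blockAllZeros_iff_card hℓ x j).mp hj.2).symm
    _ ≤ ∑ j : Fin b, blockZeros b ℓ x j :=
        Finset.sum_le_sum_of_subset (Finset.filter_subset _ _)

lemma zeros_eq_zrr (hℓ : 0 < ℓ) (x : Fin (b * ℓ) → Bool)
    (h : ∀ j : Fin b, blockAllOnes b ℓ x j ∨ blockAllZeros b ℓ x j) :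
    zerosCount x = zeroRoyalRoad b ℓ x := by
  classical
  rw [zerosCount_eq_sum hℓ x]
  unfold zeroRoyalRoad
  rw [← Finset.sum_filter_add_sum_filter_not Finset.univ
    (fun j : Fin b => blockAllZeros b ℓ x j) (fun j => blockZeros b ℓ x j)]
  have h2 : ∑ j ∈ Finset.univ.filter fun j : Fin b => ¬ blockAllZeros b ℓ x j,
      blockZeros b ℓ x j = 0 := by
    refine Finset.sum_eq_zero fun j hj => ?_
    simp only [Finset.mem_filter] at hj
    exact blockAllOnes_zeros x j ((h j).resolve_right hj.2)
  rw [h2, Nat.add_zero]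
  calc (∑ j ∈ Finset.univ.filter fun j : Fin b => blockAllZeros b ℓ x j,
        blockZeros b ℓ x j)
      = ∑ _j ∈ Finset.univ.filter fun j : Fin b => blockAllZeros b ℓ x j, ℓ := by
        refine Finset.sum_congr rfl fun j hj => ?_
        simp only [Finset.mem_filter] at hj
        exact (blockAllZeros_iff_card hℓ x j).mp hj.2
    _ = ℓ * (Finset.univ.filter fun j : Fin b => blockAllZeros b ℓ x j).card := by
        rw [Finset.sum_const, smul_eq_mul, Nat.mul_comm]

end Aux

/-- For OMZR (f1 = OneMax, f2 = ZeroRoyalRoad) on bit-strings of length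
n = b·ℓ with b > 1, the Pareto set is exactly the set of bit-strings in which every block is
all-ones or all-zeros. -/
theorem OMZR_pareto_set (b ℓ : ℕ) (hb : 1 < b) (hℓ : 1 ≤ ℓ) (x : Fin (b * ℓ) → Bool) :
    paretoOptimal onesCount (zeroRoyalRoad b ℓ) x ↔
      ∀ j : Fin b, blockAllOnes b ℓ x j ∨ blockAllZeros b ℓ x j := by
  classical
  have hℓ0 : 0 < ℓ := hℓ
  constructor
  · intro hp j
    by_contra hj
    push_neg at hj
    obtain ⟨h1, h2⟩ := hj
    set y : Fin (b * ℓ) → Bool := fun i => if (i : ℕ) / ℓ = (j : ℕ) then true else x i with hy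
    have hagree : ∀ i : Fin (b * ℓ), (i : ℕ) / ℓ ≠ (j : ℕ) → y i = x i := by
      intro i hi; simp only [hy, if_neg hi]
    have hyj' : ∀ i : Fin (b * ℓ), (i : ℕ) / ℓ = (j : ℕ) → y i = true := by
      intro i hi; simp only [hy, if_pos hi]
    have hyblock : blockOnes b ℓ y j = ℓ := by
      unfold blockOnes
      rw [Finset.filter_congr (q := fun i : Fin (b * ℓ) => (i : ℕ) / ℓ = (j : ℕ))
        (fun i _ => by
          simp only [and_iff_left_iff_imp]
          exact fun hi => hyj' i hi)]
      exact blockSet_card hℓ0 j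
    have hxblock : blockOnes b ℓ x j < ℓ := by
      have hadd := blockOnes_add_blockZeros hℓ0 x j
      have hzpos : 0 < blockZeros b ℓ x j := by
        unfold blockAllOnes at h1
        push_neg at h1
        obtain ⟨i, hi, hxi⟩ := h1
        have hxi' : x i = false := by simpa using hxi
        refine Finset.card_pos.mpr ⟨i, ?_⟩
        simp [blockZeros, hi, hxi']
      omega
    have heqblock : ∀ j' : Fin b, j' ≠ j → blockOnes b ℓ y j' = blockOnes b ℓ x j' := by
      intro j' hne
      unfold blockOnes
      congr 1
      refine Finset.filter_congr fun i _ => ?_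
      refine and_congr_right fun hi => ?_
      rw [hagree i (by rw [hi]; exact fun hh => hne (Fin.ext hh))]
    have hones : onesCount x < onesCount y := by
      rw [onesCount_eq_sum hℓ0 x, onesCount_eq_sum hℓ0 y]
      refine Finset.sum_lt_sum (fun j' _ => ?_) ⟨j, Finset.mem_univ _, ?_⟩
      · rcases eq_or_ne j' j with rfl | hne
        · rw [hyblock]; exact le_of_lt hxblock
        · rw [heqblock j' hne]
      · rw [hyblock]; exact hxblock
    have hzrr : zeroRoyalRoad b ℓ y = zeroRoyalRoad b ℓ x := by
      unfold zeroRoyalRoad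
      congr 1
      refine congrArg Finset.card (Finset.filter_congr fun j' _ => ?_)
      rcases eq_or_ne j' j with rfl | hne
      · constructor
        · intro hz
          exfalso
          have hlt : (j' : ℕ) * ℓ < b * ℓ :=
            Nat.mul_lt_mul_of_lt_of_le j'.isLt (le_refl ℓ) hℓ0
          set i0 : Fin (b * ℓ) := ⟨(j' : ℕ) * ℓ, hlt⟩ with hi0
          have hdiv : (i0 : ℕ) / ℓ = (j' : ℕ) := Nat.mul_div_cancel _ hℓ0
          have := hz i0 hdiv
          rw [hyj' i0 hdiv] at this
          simp at this
        · intro hz; exact absurd hz h2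
      · unfold blockAllZeros
        constructor
        · intro hz i hi
          rw [← hagree i (by rw [hi]; exact fun hh => hne (Fin.ext hh))]
          exact hz i hi
        · intro hz i hi
          rw [hagree i (by rw [hi]; exact fun hh => hne (Fin.ext hh))]
          exact hz i hi
    exact hp y ⟨le_of_lt hones, hzrr.symm.le, Or.inl hones⟩
  · intro h y hdom
    obtain ⟨hf1, hf2, hstrict⟩ := hdom
    have e1 := ones_add_zeros x
    have e2 := ones_add_zeros y
    have e3 := zrr_le_zeros hℓ0 y
    have e4 := zeros_eq_zrr hℓ0 x h
    omega
end

section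
/- For the bi-objective problem ORZR with f1 = OneRoyalRoad and f2 = ZeroRoyalRoad on bit-strings of length n = b·ℓ (b > 1), the Pareto front, i.e. the image of the Pareto set under (f1, f2), equals exactly { (i·ℓ, (b−i)·ℓ) : i ∈ {0, 1, …, b} }. -/
open Finset

/-! A block cannot be all-ones and all-zeros at once, so `f1 x + f2 x ≤ b * ℓ` for every `x`,
with equality for the string whose first `i` blocks are ones and whose other blocks are zeros.
These strings are therefore Pareto optimal, and any `x` with `f1 x = i * ℓ` is weakly dominated
by the `i`-th of them, so a Pareto optimal `x` must also have `f2 x = (b - i) * ℓ`. -/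

section Pareto

variable {n : ℕ} {f1 f2 : (Fin n → Bool) → ℕ} {x y : Fin n → Bool}

theorem paretoOptimal_of_forall_add_le (h : ∀ y, f1 y + f2 y ≤ f1 x + f2 x) :
    paretoOptimal f1 f2 x := by
  rintro y ⟨h1, h2, h12⟩
  have := h y
  omega

theorem paretoOptimal.eq_of_le_of_le (hx : paretoOptimal f1 f2 x) (h1 : f1 x ≤ f1 y)
    (h2 : f2 x ≤ f2 y) : f1 y = f1 x ∧ f2 y = f2 x := by
  by_contra hne
  exact hx y ⟨h1, h2, by omega⟩

end Pareto

section RoyalRoad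

variable {b ℓ : ℕ}

theorem exists_mem_block (hℓ : 0 < ℓ) (j : Fin b) : ∃ i : Fin (b * ℓ), (i : ℕ) / ℓ = j :=
  ⟨⟨j * ℓ, Nat.mul_lt_mul_of_pos_right j.isLt hℓ⟩, Nat.mul_div_cancel _ hℓ⟩

theorem disjoint_blockAllOnes_blockAllZeros (hℓ : 0 < ℓ) (x : Fin (b * ℓ) → Bool) :
    Disjoint (univ.filter fun j => blockAllOnes b ℓ x j)
      (univ.filter fun j => blockAllZeros b ℓ x j) := by
  refine disjoint_filter.2 fun j _ hones hzeros => ?_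
  obtain ⟨i, hi⟩ := exists_mem_block hℓ j
  simpa [hones i hi] using hzeros i hi

theorem oneRoyalRoad_add_zeroRoyalRoad_le (x : Fin (b * ℓ) → Bool) :
    oneRoyalRoad b ℓ x + zeroRoyalRoad b ℓ x ≤ b * ℓ := by
  rcases Nat.eq_zero_or_pos ℓ with rfl | hℓ
  · simp [oneRoyalRoad, zeroRoyalRoad]
  rw [oneRoyalRoad, zeroRoyalRoad, ← mul_add, mul_comm b,
    ← card_union_of_disjoint (disjoint_blockAllOnes_blockAllZeros hℓ x)]
  exact Nat.mul_le_mul_left ℓ (card_le_univ _ |>.trans_eq (Fintype.card_fin b))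

theorem exists_oneRoyalRoad_eq (x : Fin (b * ℓ) → Bool) :
    ∃ i ≤ b, oneRoyalRoad b ℓ x = i * ℓ :=
  ⟨_, card_le_univ _ |>.trans_eq (Fintype.card_fin b), mul_comm _ _⟩

def onesInFirstBlocks (b ℓ i : ℕ) : Fin (b * ℓ) → Bool := fun k => decide ((k : ℕ) / ℓ < i)

theorem blockAllOnes_onesInFirstBlocks_iff (hℓ : 0 < ℓ) {i : ℕ} {j : Fin b} :
    blockAllOnes b ℓ (onesInFirstBlocks b ℓ i) j ↔ (j : ℕ) < i := by
  refine ⟨fun h => ?_, fun h k hk => by simp [onesInFirstBlocks, hk, h]⟩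
  obtain ⟨k, hk⟩ := exists_mem_block hℓ j
  simpa [onesInFirstBlocks, hk] using h k hk

theorem blockAllZeros_onesInFirstBlocks_iff (hℓ : 0 < ℓ) {i : ℕ} {j : Fin b} :
    blockAllZeros b ℓ (onesInFirstBlocks b ℓ i) j ↔ ¬ (j : ℕ) < i := by
  refine ⟨fun h => ?_, fun h k hk => by simp [onesInFirstBlocks, hk, h]⟩
  obtain ⟨k, hk⟩ := exists_mem_block hℓ j
  simpa [onesInFirstBlocks, hk] using h k hk

theorem oneRoyalRoad_onesInFirstBlocks {i : ℕ} (hi : i ≤ b) :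
    oneRoyalRoad b ℓ (onesInFirstBlocks b ℓ i) = i * ℓ := by
  rcases Nat.eq_zero_or_pos ℓ with rfl | hℓ
  · simp [oneRoyalRoad]
  simp only [oneRoyalRoad, blockAllOnes_onesInFirstBlocks_iff hℓ, Fin.card_filter_val_lt,
    min_eq_right hi, mul_comm]

theorem zeroRoyalRoad_onesInFirstBlocks {i : ℕ} (hi : i ≤ b) :
    zeroRoyalRoad b ℓ (onesInFirstBlocks b ℓ i) = (b - i) * ℓ := by
  rcases Nat.eq_zero_or_pos ℓ with rfl | hℓ
  · simp [zeroRoyalRoad]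
  simp only [zeroRoyalRoad, blockAllZeros_onesInFirstBlocks_iff hℓ, filter_not,
    card_sdiff_of_subset (filter_subset _ _), card_univ, Fintype.card_fin,
    Fin.card_filter_val_lt, min_eq_right hi, mul_comm]

theorem paretoOptimal_onesInFirstBlocks {i : ℕ} (hi : i ≤ b) :
    paretoOptimal (oneRoyalRoad b ℓ) (zeroRoyalRoad b ℓ) (onesInFirstBlocks b ℓ i) := by
  refine paretoOptimal_of_forall_add_le fun y => ?_
  rw [oneRoyalRoad_onesInFirstBlocks hi, zeroRoyalRoad_onesInFirstBlocks hi, ← add_mul,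
    Nat.add_sub_cancel' hi]
  exact oneRoyalRoad_add_zeroRoyalRoad_le y

end RoyalRoad

theorem ORZR_pareto_front_general (b ℓ : ℕ) :
    {p : ℕ × ℕ | ∃ x : Fin (b * ℓ) → Bool,
        paretoOptimal (oneRoyalRoad b ℓ) (zeroRoyalRoad b ℓ) x ∧
          p = (oneRoyalRoad b ℓ x, zeroRoyalRoad b ℓ x)} =
      {p : ℕ × ℕ | ∃ i : ℕ, i ≤ b ∧ p = (i * ℓ, (b - i) * ℓ)} := by
  ext p
  constructor
  · rintro ⟨x, hx, rfl⟩
    obtain ⟨i, hi, hone⟩ := exists_oneRoyalRoad_eq x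
    have hzero : zeroRoyalRoad b ℓ x ≤ (b - i) * ℓ := by
      have := oneRoyalRoad_add_zeroRoyalRoad_le x
      rw [Nat.sub_mul]
      omega
    obtain ⟨-, hzero_eq⟩ := hx.eq_of_le_of_le (y := onesInFirstBlocks b ℓ i)
      (by rw [oneRoyalRoad_onesInFirstBlocks hi, hone])
      (by rwa [zeroRoyalRoad_onesInFirstBlocks hi])
    rw [zeroRoyalRoad_onesInFirstBlocks hi] at hzero_eq
    exact ⟨i, hi, by rw [hone, hzero_eq]⟩
  · rintro ⟨i, hi, rfl⟩
    exact ⟨onesInFirstBlocks b ℓ i, paretoOptimal_onesInFirstBlocks hi,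
      by rw [oneRoyalRoad_onesInFirstBlocks hi, zeroRoyalRoad_onesInFirstBlocks hi]⟩

/-- For ORZR on bit-strings of length n = b·ℓ with b > 1, the Pareto front,
i.e. the image of the Pareto set under (f1, f2), equals { (i·ℓ, (b−i)·ℓ) : 0 ≤ i ≤ b }. -/
theorem ORZR_pareto_front (b ℓ : ℕ) (hb : 1 < b) (hℓ : 1 ≤ ℓ) :
    {p : ℕ × ℕ | ∃ x : Fin (b * ℓ) → Bool,
        paretoOptimal (oneRoyalRoad b ℓ) (zeroRoyalRoad b ℓ) x ∧
          p = (oneRoyalRoad b ℓ x, zeroRoyalRoad b ℓ x)} =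
      {p : ℕ × ℕ | ∃ i : ℕ, i ≤ b ∧ p = (i * ℓ, (b - i) * ℓ)} :=
  ORZR_pareto_front_general b ℓ
end

section
/- For the bi-objective problem ORZR with f1 = OneRoyalRoad and f2 = ZeroRoyalRoad on bit-strings of length n = b·ℓ (b > 1), the Pareto set has exactly 2^b elements; equivalently, the ratio of Pareto optimal solutions among all 2^n bit-strings equals 2^{n/ℓ} / 2^n. -/
open Finset

/-!
A string `x` has `f1 x + f2 x = ℓ · (#all-ones blocks + #all-zeros blocks) ≤ ℓ · b`, with
equality exactly when every block is constant, so block-constant strings are Pareto optimal.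
Conversely, if some block of `x` is mixed, filling it with ones creates a new all-ones block
without destroying any all-zeros block, and the result dominates `x`. Hence the Pareto set is
the set of block-constant strings, which are in bijection with `Fin b → Bool`.
-/

namespace RoyalRoad

variable {b ℓ : ℕ}

def blockOf (i : Fin (b * ℓ)) : Fin b :=
  ⟨i / ℓ, Nat.div_lt_of_lt_mul (mul_comm b ℓ ▸ i.isLt)⟩

def blockStart (hℓ : 0 < ℓ) (j : Fin b) : Fin (b * ℓ) :=
  ⟨j * ℓ, Nat.mul_lt_mul_of_pos_right j.isLt hℓ⟩

lemma blockOf_blockStart (hℓ : 0 < ℓ) (j : Fin b) : blockOf (blockStart hℓ j) = j :=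
  Fin.ext (Nat.mul_div_cancel j hℓ)

lemma blockOf_surjective (hℓ : 0 < ℓ) : Function.Surjective (blockOf : Fin (b * ℓ) → Fin b) :=
  fun j => ⟨blockStart hℓ j, blockOf_blockStart hℓ j⟩

lemma not_blockAllOnes_of_blockAllZeros (hℓ : 0 < ℓ) {x : Fin (b * ℓ) → Bool} {j : Fin b}
    (h : blockAllZeros b ℓ x j) : ¬ blockAllOnes b ℓ x j := fun h' => by
  have hj : (blockStart hℓ j : ℕ) / ℓ = j := congrArg Fin.val (blockOf_blockStart hℓ j)
  simpa [h _ hj] using h' _ hj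

def IsBlockConstant (b ℓ : ℕ) (x : Fin (b * ℓ) → Bool) : Prop :=
  ∀ j : Fin b, blockAllOnes b ℓ x j ∨ blockAllZeros b ℓ x j

lemma card_blockAllOnes_add_card_blockAllZeros_le (hℓ : 0 < ℓ) (x : Fin (b * ℓ) → Bool) :
    #(univ.filter (blockAllOnes b ℓ x)) + #(univ.filter (blockAllZeros b ℓ x)) ≤ b := by
  calc #(univ.filter (blockAllOnes b ℓ x)) + #(univ.filter (blockAllZeros b ℓ x))
      ≤ #(univ.filter (blockAllOnes b ℓ x)) + #(univ.filter fun j => ¬ blockAllOnes b ℓ x j) := by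
        gcongr with j
        exact not_blockAllOnes_of_blockAllZeros hℓ
    _ = b := by rw [card_filter_add_card_filter_not, card_univ, Fintype.card_fin]

lemma card_blockAllOnes_add_card_blockAllZeros (hℓ : 0 < ℓ) {x : Fin (b * ℓ) → Bool}
    (hx : IsBlockConstant b ℓ x) :
    #(univ.filter (blockAllOnes b ℓ x)) + #(univ.filter (blockAllZeros b ℓ x)) = b := by
  have hzeros : univ.filter (blockAllZeros b ℓ x) = univ.filter fun j => ¬ blockAllOnes b ℓ x j :=
    filter_congr fun j _ =>
      ⟨not_blockAllOnes_of_blockAllZeros hℓ, (hx j).resolve_left⟩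
  rw [hzeros, card_filter_add_card_filter_not, card_univ, Fintype.card_fin]

lemma paretoOptimal_of_isBlockConstant (hℓ : 0 < ℓ) {x : Fin (b * ℓ) → Bool}
    (hx : IsBlockConstant b ℓ x) : paretoOptimal (oneRoyalRoad b ℓ) (zeroRoyalRoad b ℓ) x := by
  rintro y ⟨h1, h2, h12⟩
  have hy : oneRoyalRoad b ℓ y + zeroRoyalRoad b ℓ y ≤ ℓ * b := by
    rw [oneRoyalRoad, zeroRoyalRoad, ← mul_add]
    exact Nat.mul_le_mul_left ℓ (card_blockAllOnes_add_card_blockAllZeros_le hℓ y)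
  have hx : oneRoyalRoad b ℓ x + zeroRoyalRoad b ℓ x = ℓ * b := by
    rw [oneRoyalRoad, zeroRoyalRoad, ← mul_add, card_blockAllOnes_add_card_blockAllZeros hℓ hx]
  omega

def fillBlock (x : Fin (b * ℓ) → Bool) (j : Fin b) : Fin (b * ℓ) → Bool :=
  fun i => if blockOf i = j then true else x i

lemma fillBlock_dominates (hℓ : 0 < ℓ) {x : Fin (b * ℓ) → Bool} {j : Fin b}
    (h1 : ¬ blockAllOnes b ℓ x j) (h0 : ¬ blockAllZeros b ℓ x j) :
    dominates (oneRoyalRoad b ℓ) (zeroRoyalRoad b ℓ) (fillBlock x j) x := by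
  have hsub : univ.filter (blockAllOnes b ℓ x) ⊆ univ.filter (blockAllOnes b ℓ (fillBlock x j)) :=
    monotone_filter_right _ fun k _ hk i hi => by
      by_cases hij : blockOf i = j <;> simp [fillBlock, hij, hk i hi]
  have hj : blockAllOnes b ℓ (fillBlock x j) j := fun i hi => by
    simp [fillBlock, show blockOf i = j from Fin.ext hi]
  have hones := (ssubset_iff_of_subset hsub).2 ⟨j, by simpa using hj, by simpa using h1⟩
  have hzeros : univ.filter (blockAllZeros b ℓ x)
      ⊆ univ.filter (blockAllZeros b ℓ (fillBlock x j)) := by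
    refine monotone_filter_right _ fun k _ hk i hi => ?_
    have hkj : blockOf i ≠ j := fun hij =>
      h0 (Fin.ext (hi.symm.trans (congrArg Fin.val hij)) ▸ hk)
    simp [fillBlock, hkj, hk i hi]
  have hlt := Nat.mul_lt_mul_of_pos_left (card_lt_card hones) hℓ
  exact ⟨hlt.le, Nat.mul_le_mul_left ℓ (card_le_card hzeros), Or.inl hlt⟩

lemma isBlockConstant_of_paretoOptimal (hℓ : 0 < ℓ) {x : Fin (b * ℓ) → Bool}
    (hx : paretoOptimal (oneRoyalRoad b ℓ) (zeroRoyalRoad b ℓ) x) : IsBlockConstant b ℓ x := by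
  intro j
  by_contra! h
  exact hx _ (fillBlock_dominates hℓ h.1 h.2)

lemma isBlockConstant_iff_exists_comp_blockOf (hℓ : 0 < ℓ) (x : Fin (b * ℓ) → Bool) :
    IsBlockConstant b ℓ x ↔ ∃ c : Fin b → Bool, c ∘ blockOf = x := by
  constructor
  · intro hx
    refine ⟨x ∘ blockStart hℓ, funext fun i => ?_⟩
    have hi : (blockStart hℓ (blockOf i) : ℕ) / ℓ = blockOf i :=
      congrArg Fin.val (blockOf_blockStart hℓ _)
    rcases hx (blockOf i) with h | h <;>
      simp only [Function.comp_apply, h _ hi, h i rfl]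
  · rintro ⟨c, rfl⟩ j
    cases hc : c j
    · exact Or.inr fun i hi => by simp [show blockOf i = j from Fin.ext hi, hc]
    · exact Or.inl fun i hi => by simp [show blockOf i = j from Fin.ext hi, hc]

theorem paretoOptimal_iff_exists_comp_blockOf (hℓ : 0 < ℓ) (x : Fin (b * ℓ) → Bool) :
    paretoOptimal (oneRoyalRoad b ℓ) (zeroRoyalRoad b ℓ) x ↔
      ∃ c : Fin b → Bool, c ∘ blockOf = x :=
  ⟨fun hx => (isBlockConstant_iff_exists_comp_blockOf hℓ x).1
      (isBlockConstant_of_paretoOptimal hℓ hx),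
    fun hx => paretoOptimal_of_isBlockConstant hℓ
      ((isBlockConstant_iff_exists_comp_blockOf hℓ x).2 hx)⟩

end RoyalRoad

theorem ORZR_pareto_count_general (b ℓ : ℕ) (hℓ : 1 ≤ ℓ) :
    Nat.card {x : Fin (b * ℓ) → Bool //
        paretoOptimal (oneRoyalRoad b ℓ) (zeroRoyalRoad b ℓ) x} = 2 ^ b ∧
      ((Nat.card {x : Fin (b * ℓ) → Bool //
          paretoOptimal (oneRoyalRoad b ℓ) (zeroRoyalRoad b ℓ) x} : ℝ) / 2 ^ (b * ℓ)
        = (2 : ℝ) ^ (b * ℓ / ℓ) / 2 ^ (b * ℓ)) := by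
  have hcard : Nat.card {x : Fin (b * ℓ) → Bool //
      paretoOptimal (oneRoyalRoad b ℓ) (zeroRoyalRoad b ℓ) x} = 2 ^ b := by
    calc _ = Nat.card (Set.range fun c : Fin b → Bool =>
            c ∘ (RoyalRoad.blockOf : Fin (b * ℓ) → Fin b)) :=
          Nat.card_congr
            (Equiv.subtypeEquivRight (RoyalRoad.paretoOptimal_iff_exists_comp_blockOf hℓ))
      _ = 2 ^ b := by
        rw [Nat.card_range_of_injective (RoyalRoad.blockOf_surjective hℓ).injective_comp_right]
        simp
  refine ⟨hcard, ?_⟩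
  rw [hcard, Nat.mul_div_cancel b hℓ]
  norm_num

/-- For ORZR on bit-strings of length n = b·ℓ with b > 1, the Pareto set has
exactly 2^b elements; equivalently the ratio of Pareto optimal solutions among all 2^n
bit-strings equals 2^{n/ℓ} / 2^n. -/
theorem ORZR_pareto_count (b ℓ : ℕ) (hb : 1 < b) (hℓ : 1 ≤ ℓ) :
    Nat.card {x : Fin (b * ℓ) → Bool //
        paretoOptimal (oneRoyalRoad b ℓ) (zeroRoyalRoad b ℓ) x} = 2 ^ b ∧
      ((Nat.card {x : Fin (b * ℓ) → Bool //
          paretoOptimal (oneRoyalRoad b ℓ) (zeroRoyalRoad b ℓ) x} : ℝ) / 2 ^ (b * ℓ)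
        = (2 : ℝ) ^ (b * ℓ / ℓ) / 2 ^ (b * ℓ)) :=
  ORZR_pareto_count_general b ℓ hℓ
end
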